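/- arXiv:2102.03903 — 3 statements merged into one kernel-verified Lean document; each statement's English description precedes it below -/
import Mathlib

section
/- The directional Haar filter bank consisting of the 2×2 filters τ₀ = (1/4)[[1,1],[1,1]], τ₁ = (1/4)[[1,0],[0,-1]], τ₂ = (1/4)[[0,-1],[1,0]], τ₃ = (1/4)[[1,-1],[0,0]], τ₄ = (1/4)[[1,0],[-1,0]], τ₅ = (1/4)[[0,0],[1,-1]], τ₆ = (1/4)[[0,1],[0,-1]] satisfies the tight framelet condition: for all ξ ∈ ℝ² and all ω ∈ {0,1}², the sum over ℓ = 0,…,6 of τ̂ℓ(ξ) · conj(τ̂ℓ(ξ + πω)) equals 1 if ω = 0 and 0 otherwise, where τ̂(ξ) = Σ_k τ(k) e^{-i k·ξ}. -/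
open scoped BigOperators

/-- The directional Haar filters, as 2×2 matrices of coefficients indexed by
`{0,1}²` (top-left = (0,0), top-right = (0,1), bottom-left = (1,0), bottom-right = (1,1)). -/
noncomputable def dhfFilter : Fin 7 → Matrix (Fin 2) (Fin 2) ℝ :=
  ![!![1/4, 1/4; 1/4, 1/4],
    !![1/4, 0; 0, -1/4],
    !![0, -1/4; 1/4, 0],
    !![1/4, -1/4; 0, 0],
    !![1/4, 0; -1/4, 0],
    !![0, 0; 1/4, -1/4],
    !![0, 1/4; 0, -1/4]]

/-- Fourier series of a filter supported on `{0,1}²`: `τ̂(ξ) = Σ_k τ(k) e^{-i k·ξ}`. -/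
noncomputable def dhfFourier (τ : Matrix (Fin 2) (Fin 2) ℝ) (ξ : ℝ × ℝ) : ℂ :=
  ∑ k₁ : Fin 2, ∑ k₂ : Fin 2,
    (τ k₁ k₂ : ℂ) * Complex.exp (-Complex.I * (((k₁ : ℕ) : ℝ) * ξ.1 + ((k₂ : ℕ) : ℝ) * ξ.2))

lemma dhf0 : dhfFilter 0 = !![1/4, 1/4; 1/4, 1/4] := rfl
lemma dhf1 : dhfFilter 1 = !![1/4, 0; 0, -1/4] := rfl
lemma dhf2 : dhfFilter 2 = !![0, -1/4; 1/4, 0] := rfl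
lemma dhf3 : dhfFilter 3 = !![1/4, -1/4; 0, 0] := rfl
lemma dhf4 : dhfFilter 4 = !![1/4, 0; -1/4, 0] := rfl
lemma dhf5 : dhfFilter 5 = !![0, 0; 1/4, -1/4] := rfl
lemma dhf6 : dhfFilter 6 = !![0, 1/4; 0, -1/4] := rfl

set_option maxHeartbeats 4000000 in
/-- The directional Haar filter bank is a tight framelet filter bank:
`Σ_{ℓ=0}^6 τ̂ℓ(ξ) conj(τ̂ℓ(ξ+πω)) = δ(ω)` for all `ξ ∈ ℝ²` and `ω ∈ {0,1}²`. -/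
theorem dhf_tight_framelet :
    ∀ (ξ : ℝ × ℝ) (ω : Fin 2 × Fin 2),
      ∑ ℓ : Fin 7,
        dhfFourier (dhfFilter ℓ) ξ *
          (starRingEnd ℂ)
            (dhfFourier (dhfFilter ℓ)
              (ξ.1 + Real.pi * ((ω.1 : ℕ) : ℝ), ξ.2 + Real.pi * ((ω.2 : ℕ) : ℝ))) =
      if ω = (0, 0) then 1 else 0 := by
  have hpi : Complex.exp (Complex.I * (Real.pi : ℝ)) = -1 := by
    rw [mul_comm]; exact Complex.exp_pi_mul_I
  rintro ⟨x, y⟩ ω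
  have hAC : Complex.exp (-(Complex.I * (x:ℝ))) * Complex.exp (Complex.I * (x:ℝ)) = 1 := by
    rw [← Complex.exp_add, neg_add_cancel, Complex.exp_zero]
  have hBD : Complex.exp (-(Complex.I * (y:ℝ))) * Complex.exp (Complex.I * (y:ℝ)) = 1 := by
    rw [← Complex.exp_add, neg_add_cancel, Complex.exp_zero]
  set eA := Complex.exp (Complex.I * (x:ℝ)) with heA
  set eB := Complex.exp (Complex.I * (y:ℝ)) with heB
  set eC := Complex.exp (-(Complex.I * (x:ℝ))) with heC
  set eD := Complex.exp (-(Complex.I * (y:ℝ))) with heD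
  fin_cases ω <;>
    simp only [dhfFourier, dhf0, dhf1, dhf2, dhf3, dhf4, dhf5, dhf6,
      Fin.sum_univ_seven, Fin.sum_univ_two,
      Matrix.cons_val', Matrix.of_apply, Matrix.cons_val_zero, Matrix.cons_val_one, Matrix.head_cons,
      Matrix.head_fin_const, Matrix.empty_val', Matrix.cons_val_fin_one, Fin.isValue,
      Fin.val_zero, Fin.val_one, Nat.cast_zero, Nat.cast_one] <;>
    push_cast <;>
    simp only [← Complex.exp_conj, map_mul, map_add, map_neg, Complex.conj_I,
      Complex.conj_ofReal, map_ofNat, map_one, map_zero, map_div₀, map_neg, map_sub] <;>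
    simp only [mul_add, add_mul, neg_mul, mul_zero, zero_mul, mul_one, one_mul,
      zero_add, add_zero, mul_neg, neg_neg, neg_add, Complex.exp_add,
      Complex.exp_zero, hpi, ← heA, ← heB, ← heC, ← heD] <;>
    (first | rw [if_pos (by decide)] | rw [if_neg (by decide)]) <;>
    first
      | linear_combination ((1/4 : ℂ) + (1/4 : ℂ)*eB*eD) * hAC + (1/2 : ℂ) * hBD
      | linear_combination ((1/4 : ℂ) + (-1/4 : ℂ)*eB*eD) * hAC + (-1/2 : ℂ) * hBD
      | linear_combination ((-1/4 : ℂ) + (-1/4 : ℂ)*eB*eD) * hAC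
      | linear_combination ((-1/4 : ℂ) + (1/4 : ℂ)*eB*eD) * hAC
end

section
/- Let c₀ = (√3/3)[1,1,1], c₁ = (√2/2)[1,0,-1], c₂ = (√6/6)[1,-2,1] be the rows of the 3×3 DCT-II matrix. Then the 9 filters τ_{3i+j} = (1/3) c_iᵀ c_j for i,j ∈ {0,1,2} satisfy the partition of unity condition Σ_{κ=0}^8 |τ̂_κ(ξ)|² = 1 for all ξ ∈ ℝ². -/
/-! The filter `(1/3) cᵢᵀ cⱼ` is a tensor product, so its Fourier series factorises as
`(1/3) ĉᵢ(ξ₁) ĉⱼ(ξ₂)` with `ĉᵢ(x) = Σₖ cᵢ(k) e^{-ikx}`. The vector `(ĉᵢ(x))ᵢ` is the orthogonal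
DCT matrix applied to `(e^{-ikx})ₖ`, whose entries have modulus one, so `Σᵢ |ĉᵢ(x)|² = 3`.
Hence the nine squared moduli sum to `(1/9) · 3 · 3 = 1`. -/

open scoped BigOperators

/-- The rows of the 3×3 DCT-II matrix. -/
noncomputable def dctRow : Fin 3 → Fin 3 → ℝ :=
  ![![Real.sqrt 3 / 3, Real.sqrt 3 / 3, Real.sqrt 3 / 3],
    ![Real.sqrt 2 / 2, 0, -(Real.sqrt 2 / 2)],
    ![Real.sqrt 6 / 6, -2 * (Real.sqrt 6 / 6), Real.sqrt 6 / 6]]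

/-- Fourier series of a filter supported on `{0,1,2}²`: `τ̂(ξ) = Σ_k τ(k) e^{-i k·ξ}`. -/
noncomputable def dctFourier (τ : Fin 3 → Fin 3 → ℝ) (ξ : ℝ × ℝ) : ℂ :=
  ∑ k₁ : Fin 3, ∑ k₂ : Fin 3,
    (τ k₁ k₂ : ℂ) * Complex.exp (-Complex.I * (((k₁ : ℕ) : ℝ) * ξ.1 + ((k₂ : ℕ) : ℝ) * ξ.2))

open Complex Matrix

theorem ofReal_sum_norm_sq_eq_star_dotProduct {𝕜 ι : Type*} [RCLike 𝕜] [Fintype ι] (w : ι → 𝕜) :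
    ((∑ i, ‖w i‖ ^ 2 : ℝ) : 𝕜) = star w ⬝ᵥ w := by
  simp [dotProduct, RCLike.conj_mul]

theorem sum_norm_sq_mulVec_of_conjTranspose_mul_self {𝕜 ι κ : Type*} [RCLike 𝕜] [Fintype ι]
    [Fintype κ] [DecidableEq κ] {C : Matrix ι κ 𝕜} (hC : Cᴴ * C = 1) (z : κ → 𝕜) :
    ∑ i, ‖(C *ᵥ z) i‖ ^ 2 = ∑ k, ‖z k‖ ^ 2 := by
  apply RCLike.ofReal_injective (K := 𝕜)
  rw [ofReal_sum_norm_sq_eq_star_dotProduct, ofReal_sum_norm_sq_eq_star_dotProduct, star_mulVec,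
    dotProduct_mulVec, vecMul_vecMul, hC, vecMul_one]

theorem dctRow_transpose_mul_self : (of dctRow)ᵀ * of dctRow = 1 := by
  have h2 : √2 ^ 2 = 2 := Real.sq_sqrt (by norm_num)
  have h3 : √3 ^ 2 = 3 := Real.sq_sqrt (by norm_num)
  have h6 : √6 = √2 * √3 := by rw [← Real.sqrt_mul (by norm_num)]; norm_num
  ext k l
  fin_cases k <;> fin_cases l <;>
    simp [Matrix.mul_apply, Fin.sum_univ_three, dctRow, h6] <;> ring_nf <;> simp [h2, h3] <;>
    norm_num

noncomputable def dctFourier1 (u : Fin 3 → ℝ) (x : ℝ) : ℂ :=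
  ∑ k : Fin 3, (u k : ℂ) * exp (-I * (((k : ℕ) : ℝ) * x))

theorem dctFourier_mul (a : ℝ) (u v : Fin 3 → ℝ) (ξ : ℝ × ℝ) :
    dctFourier (fun k l => a * u k * v l) ξ = a * dctFourier1 u ξ.1 * dctFourier1 v ξ.2 := by
  rw [dctFourier1, dctFourier1, mul_assoc, Finset.sum_mul_sum, Finset.mul_sum]
  refine Finset.sum_congr rfl fun k _ => ?_
  rw [Finset.mul_sum]
  refine Finset.sum_congr rfl fun l _ => ?_
  rw [mul_add, Complex.exp_add]
  push_cast
  ring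

theorem sum_norm_sq_dctFourier1_dctRow (x : ℝ) : ∑ i, ‖dctFourier1 (dctRow i) x‖ ^ 2 = 3 := by
  have hC : ((of dctRow).map ofRealHom)ᴴ * (of dctRow).map ofRealHom = 1 := by
    rw [← conjTranspose_map _ fun _ => by simp, conjTranspose_eq_transpose_of_trivial,
      ← Matrix.map_mul, dctRow_transpose_mul_self, Matrix.map_one _ (map_zero _) (map_one _)]
  have hexp (k : Fin 3) : ‖exp (-I * (((k : ℕ) : ℝ) * x))‖ = 1 := by
    rw [show -I * (((k : ℕ) : ℝ) * x) = ((-((k : ℕ) * x) : ℝ) : ℂ) * I by push_cast; ring,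
      norm_exp_ofReal_mul_I]
  calc ∑ i, ‖dctFourier1 (dctRow i) x‖ ^ 2
      = ∑ i, ‖((of dctRow).map ofRealHom *ᵥ fun k => exp (-I * (((k : ℕ) : ℝ) * x))) i‖ ^ 2 :=
        rfl
    _ = ∑ k : Fin 3, ‖exp (-I * (((k : ℕ) : ℝ) * x))‖ ^ 2 :=
      sum_norm_sq_mulVec_of_conjTranspose_mul_self hC _
    _ = 3 := by
      simp only [hexp, one_pow, Finset.sum_const, Finset.card_univ, Fintype.card_fin]
      norm_num

/-- Partition of unity for the 9 DCT-based tight framelet filters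
`τ_{3i+j} = (1/3) cᵢᵀ cⱼ`: `Σ_{κ=0}^8 |τ̂_κ(ξ)|² = 1` for all `ξ ∈ ℝ²`. -/
theorem dct_partition_of_unity :
    ∀ ξ : ℝ × ℝ,
      ∑ i : Fin 3, ∑ j : Fin 3,
        ‖dctFourier (fun k l => (1 / 3) * dctRow i k * dctRow j l) ξ‖ ^ 2 = 1 := by
  intro ξ
  simp only [dctFourier_mul, norm_mul, mul_pow, ← Finset.mul_sum, ← Finset.sum_mul,
    sum_norm_sq_dctFourier1_dctRow]
  norm_num
end

section
/- Let M_κ, κ = 0,…,6, be the circulant matrix representations (with periodic boundary conditions) of the directional Haar filters on ℤ²_N, and set B_{1ℓ} = M₀, B_{1h} = [M₁ᵀ, …, M₆ᵀ]ᵀ. Then B_{1ℓ}ᵀ B_{1ℓ} + B_{1h}ᵀ B_{1h} = I, i.e., Σ_{κ=0}^6 M_κᵀ M_κ = I. -/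
open Matrix
open scoped BigOperators

/-- The circulant (periodic boundary) matrix representation on `ℤ²_N` of a 2×2 filter `h`:
it acts on signals by `(Mu)(γ) = Σ_k h(k) u(γ + k)` with indices mod `N`. -/
noncomputable def filterMatrix2 (N : ℕ) [NeZero N] (h : Matrix (Fin 2) (Fin 2) ℝ) :
    Matrix (ZMod N × ZMod N) (ZMod N × ZMod N) ℝ :=
  Matrix.of fun γ γ' =>
    ∑ k₁ : Fin 2, ∑ k₂ : Fin 2,
      if γ' = (γ.1 + ((k₁ : ℕ) : ZMod N), γ.2 + ((k₂ : ℕ) : ZMod N)) then h k₁ k₂ else 0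

/-- The shift (circular translation) matrix on `ℤ²_N`. -/
noncomputable def shiftM (N : ℕ) [NeZero N] (a : ZMod N × ZMod N) :
    Matrix (ZMod N × ZMod N) (ZMod N × ZMod N) ℝ :=
  Matrix.of fun γ γ' => if γ' = γ + a then 1 else 0

lemma shift_mul (N : ℕ) [NeZero N] (a b : ZMod N × ZMod N) :
    (shiftM N a)ᵀ * shiftM N b = shiftM N (b - a) := by
  ext γ γ'
  simp only [mul_apply, transpose_apply, shiftM, of_apply, ite_mul, one_mul, zero_mul]
  have : ∀ δ : ZMod N × ZMod N, (γ = δ + a) ↔ (γ - a = δ) := by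
    intro δ; constructor <;> intro h <;> [rw [h]; rw [← h]] <;> abel
  simp only [this]
  rw [Finset.sum_ite_eq]
  simp only [Finset.mem_univ, if_true]
  congr 1
  · simp only [eq_iff_iff]
    constructor <;> intro h <;> rw [h] <;> abel

lemma shiftM_zero (N : ℕ) [NeZero N] : shiftM N 0 = 1 := by
  ext γ γ'
  simp [shiftM, Matrix.one_apply, eq_comm]

lemma filterMatrix2_eq (N : ℕ) [NeZero N] (h : Matrix (Fin 2) (Fin 2) ℝ) :
    filterMatrix2 N h = ∑ k : Fin 2 × Fin 2,
      h k.1 k.2 • shiftM N (((k.1 : ℕ) : ZMod N), ((k.2 : ℕ) : ZMod N)) := by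
  ext γ γ'
  simp only [filterMatrix2, of_apply, Matrix.sum_apply, Matrix.smul_apply, shiftM,
    smul_eq_mul, mul_ite, mul_one, mul_zero]
  rw [Fintype.sum_prod_type]
  simp [Prod.ext_iff]

lemma coeff_sum (k k' : Fin 2 × Fin 2) :
    ∑ κ : Fin 7, dhfFilter κ k.1 k.2 * dhfFilter κ k'.1 k'.2 =
      if k = k' then 1/4 else 0 := by
  obtain ⟨a, b⟩ := k; obtain ⟨c, d⟩ := k'
  fin_cases a <;> fin_cases b <;> fin_cases c <;> fin_cases d <;>
    simp [dhfFilter, Fin.sum_univ_succ, Prod.ext_iff] <;> norm_num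

lemma triple_swap {α : Type*} [AddCommMonoid α]
    (f : Fin 7 → (Fin 2 × Fin 2) → (Fin 2 × Fin 2) → α) :
    ∑ κ : Fin 7, ∑ k : Fin 2 × Fin 2, ∑ k' : Fin 2 × Fin 2, f κ k k' =
    ∑ k : Fin 2 × Fin 2, ∑ k' : Fin 2 × Fin 2, ∑ κ : Fin 7, f κ k k' := by
  rw [Finset.sum_comm]
  exact Finset.sum_congr rfl fun _ _ => Finset.sum_comm

/-- Perfect reconstruction for the undecimated directional Haar transform:
`Σ_{κ=0}^6 M_κᵀ M_κ = I`, i.e. `B₁ℓᵀB₁ℓ + B₁hᵀB₁h = I`. -/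
theorem dhf_perfect_reconstruction (N : ℕ) [NeZero N] :
    ∑ κ : Fin 7, (filterMatrix2 N (dhfFilter κ))ᵀ * filterMatrix2 N (dhfFilter κ) = 1 := by
  have key : ∀ κ : Fin 7,
      (filterMatrix2 N (dhfFilter κ))ᵀ * filterMatrix2 N (dhfFilter κ) =
      ∑ k : Fin 2 × Fin 2, ∑ k' : Fin 2 × Fin 2,
        (dhfFilter κ k.1 k.2 * dhfFilter κ k'.1 k'.2) •
          shiftM N ((((k'.1 : ℕ) : ZMod N), ((k'.2 : ℕ) : ZMod N)) -
            (((k.1 : ℕ) : ZMod N), ((k.2 : ℕ) : ZMod N))) := by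
    intro κ
    rw [filterMatrix2_eq, transpose_sum, Finset.sum_mul]
    refine Finset.sum_congr rfl fun k _ => ?_
    rw [Finset.mul_sum]
    refine Finset.sum_congr rfl fun k' _ => ?_
    rw [transpose_smul, smul_mul_assoc, mul_smul_comm, smul_smul, shift_mul]
  simp only [key]
  rw [triple_swap]
  simp only [← Finset.sum_smul, coeff_sum, ite_smul, zero_smul]
  simp only [Finset.sum_ite_eq, Finset.mem_univ, if_true, sub_self, shiftM_zero,
    Finset.sum_const, Finset.card_univ]
  rw [← Nat.cast_smul_eq_nsmul ℝ, smul_smul]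
  norm_num
end
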